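/- arXiv:0712.0499 — 14 statements merged into one kernel-verified Lean document; each statement's English description precedes it below -/
import Mathlib

section
/- Let C1 and C2 be real numbers and let s, t : ℕ → ℝ be the SimRank iterates on the complete bipartite graph K_{2,2}, i.e. s 0 = 0, t 0 = 0, s (k+1) = (C2/2)·(1 + t k) and t (k+1) = (C1/2)·(1 + s k). Then for every k ∈ ℕ, s k = (C2/2) · Σ_{i=1}^{k} (1/2)^{i-1} · C1^{⌊i/2⌋} · C2^{⌊(i-1)/2⌋}. -/
/-!
Write `F A B k` for the sum on the right-hand side with the roles of `C1`, `C2` played by `A`, `B`.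
Splitting off the term `i = 1` and shifting the index shows `F A B (k + 1) = 1 + (A / 2) · F B A k`:
the shift swaps the parities of `i` and `i - 1`, hence the roles of the two bases. So the pair
`s k = (C2 / 2) · F C1 C2 k`, `t k = (C1 / 2) · F C2 C1 k` satisfies the SimRank recurrence, and a
joint induction on `k` identifies it with the iterates.
-/

open Finset

theorem Finset.sum_Icc_one_succ {M : Type*} [AddCommMonoid M] (f : ℕ → M) (k : ℕ) :
    ∑ i ∈ Icc 1 (k + 1), f i = f 1 + ∑ i ∈ Icc 1 k, f (i + 1) := by
  rw [← Ico_add_one_right_eq_Icc, ← Ico_add_one_right_eq_Icc,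
    sum_eq_sum_Ico_succ_bot (by omega), sum_Ico_add']

section AltPowSum

variable {R : Type*} [CommSemiring R]

def altPowSum (r a b : R) (k : ℕ) : R :=
  ∑ i ∈ Icc 1 k, r ^ (i - 1) * a ^ (i / 2) * b ^ ((i - 1) / 2)

@[simp]
theorem altPowSum_zero (r a b : R) : altPowSum r a b 0 = 0 := by
  simp [altPowSum]

theorem altPowSum_succ (r a b : R) (k : ℕ) :
    altPowSum r a b (k + 1) = 1 + r * a * altPowSum r b a k := by
  rw [altPowSum, altPowSum, sum_Icc_one_succ, mul_sum]
  congr 1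
  · simp
  · refine sum_congr rfl fun i hi => ?_
    have hi : 1 ≤ i := (mem_Icc.mp hi).1
    obtain ⟨j, rfl⟩ := Nat.exists_eq_add_of_le' hi
    have hhalf : (j + 1 + 1) / 2 = j / 2 + 1 := by omega
    simp only [Nat.add_sub_cancel, hhalf, pow_succ]
    ring

end AltPowSum

theorem simrank_K22_closed_form_s
    (C1 C2 : ℝ) (s t : ℕ → ℝ)
    (hs0 : s 0 = 0) (ht0 : t 0 = 0)
    (hs : ∀ k, s (k + 1) = (C2 / 2) * (1 + t k))
    (ht : ∀ k, t (k + 1) = (C1 / 2) * (1 + s k)) :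
    ∀ k : ℕ, s k =
      (C2 / 2) * ∑ i ∈ Finset.Icc 1 k,
        (1 / 2 : ℝ) ^ (i - 1) * C1 ^ (i / 2) * C2 ^ ((i - 1) / 2) := by
  have hst : ∀ k, s k = C2 / 2 * altPowSum (1 / 2) C1 C2 k ∧
      t k = C1 / 2 * altPowSum (1 / 2) C2 C1 k := by
    intro k
    induction k with
    | zero => simp [hs0, ht0]
    | succ k ih =>
      rw [hs, ht, ih.1, ih.2, altPowSum_succ, altPowSum_succ]
      constructor <;> ring
  exact fun k => (hst k).1
end

section
/- Let C1 and C2 be real numbers and let s, t : ℕ → ℝ be the SimRank iterates on the complete bipartite graph K_{2,2}, i.e. s 0 = 0, t 0 = 0, s (k+1) = (C2/2)·(1 + t k) and t (k+1) = (C1/2)·(1 + s k). Then for every k ∈ ℕ, t k = (C1/2) · Σ_{i=1}^{k} (1/2)^{i-1} · C2^{⌊i/2⌋} · C1^{⌊(i-1)/2⌋}. -/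
/-!
Unfolding the coupled recurrence, `t k` is `C1/2` times the sum of the first `k` partial products
of the alternating sequence `C2/2, C1/2, C2/2, …`, and `s k` likewise with `C1` and `C2` swapped.
One step of the recurrence prepends a factor to every product and adds the empty product, so the
two closed forms follow by a joint induction.
-/

open Finset

/-- The sum of the first `k` partial products of `r a, r b, r a, …`. -/
def alternatingGeomSum {R : Type*} [CommSemiring R] (r a b : R) (k : ℕ) : R :=
  ∑ i ∈ range k, r ^ i * a ^ ((i + 1) / 2) * b ^ (i / 2)

theorem alternatingGeomSum_succ {R : Type*} [CommSemiring R] (r a b : R) (k : ℕ) :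
    alternatingGeomSum r b a (k + 1) = 1 + r * b * alternatingGeomSum r a b k := by
  rw [alternatingGeomSum, sum_range_succ', alternatingGeomSum, mul_sum, add_comm]
  congr 1
  · simp
  · refine sum_congr rfl fun i _ => ?_
    rw [show (i + 1 + 1) / 2 = i / 2 + 1 by omega]
    ring

theorem simrank_K22_closed_form_t
    (C1 C2 : ℝ) (s t : ℕ → ℝ)
    (hs0 : s 0 = 0) (ht0 : t 0 = 0)
    (hs : ∀ k, s (k + 1) = (C2 / 2) * (1 + t k))
    (ht : ∀ k, t (k + 1) = (C1 / 2) * (1 + s k)) :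
    ∀ k : ℕ, t k =
      (C1 / 2) * ∑ i ∈ Finset.Icc 1 k,
        (1 / 2 : ℝ) ^ (i - 1) * C2 ^ (i / 2) * C1 ^ ((i - 1) / 2) := by
  have closed_forms : ∀ k, t k = C1 / 2 * alternatingGeomSum (1 / 2) C2 C1 k ∧
      s k = C2 / 2 * alternatingGeomSum (1 / 2) C1 C2 k := by
    intro k
    induction k with
    | zero => simp [alternatingGeomSum, hs0, ht0]
    | succ k ih =>
      rw [ht, hs, ih.1, ih.2, alternatingGeomSum_succ, alternatingGeomSum_succ]
      constructor <;> ring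
  intro k
  rw [(closed_forms k).1, alternatingGeomSum, ← Ico_add_one_right_eq_Icc, sum_Ico_eq_sum_range]
  simp only [add_tsub_cancel_right, add_comm 1]
end

section
/- Let C1, C2 be real numbers with 0 ≤ C1 ≤ 1 and 0 ≤ C2 ≤ 1, and let s, t : ℕ → ℝ be the SimRank iterates on K_{2,2} (s 0 = 0, t 0 = 0, s (k+1) = (C2/2)·(1 + t k), t (k+1) = (C1/2)·(1 + s k)). Then the sequence s converges to some limit L ∈ ℝ, and L ≤ C2. -/
theorem simrank_K22_limit_le
    (C1 C2 : ℝ) (hC1 : 0 ≤ C1) (hC1' : C1 ≤ 1) (hC2 : 0 ≤ C2) (hC2' : C2 ≤ 1)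
    (s t : ℕ → ℝ)
    (hs0 : s 0 = 0) (ht0 : t 0 = 0)
    (hs : ∀ k, s (k + 1) = (C2 / 2) * (1 + t k))
    (ht : ∀ k, t (k + 1) = (C1 / 2) * (1 + s k)) :
    ∃ L : ℝ, Filter.Tendsto s Filter.atTop (nhds L) ∧ L ≤ C2 := by
  -- bounds: 0 ≤ s k ≤ 1 and 0 ≤ t k ≤ 1
  have hbound : ∀ k, (0 ≤ s k ∧ s k ≤ 1) ∧ (0 ≤ t k ∧ t k ≤ 1) := by
    intro k
    induction k with
    | zero => simp [hs0, ht0]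
    | succ n ih =>
      obtain ⟨⟨hs0n, hs1n⟩, ⟨ht0n, ht1n⟩⟩ := ih
      constructor
      · rw [hs n]
        constructor
        · positivity
        · nlinarith
      · rw [ht n]
        constructor
        · positivity
        · nlinarith
  -- monotone step
  have hmono : ∀ k, s k ≤ s (k + 1) ∧ t k ≤ t (k + 1) := by
    intro k
    induction k with
    | zero =>
      rw [hs0, ht0, hs 0, ht 0, hs0, ht0]
      constructor <;> nlinarith
    | succ n ih =>
      obtain ⟨ihs, iht⟩ := ih
      constructor
      · rw [hs (n+1), hs n]; nlinarith
      · rw [ht (n+1), ht n]; nlinarith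
  have hsmono : Monotone s := monotone_nat_of_le_succ (fun k => (hmono k).1)
  have hsC2 : ∀ k, s k ≤ C2 := by
    intro k
    cases k with
    | zero => rw [hs0]; exact hC2
    | succ n =>
      rw [hs n]
      have := (hbound n).2.2
      nlinarith
  have hbdd : BddAbove (Set.range s) := ⟨C2, by rintro x ⟨k, rfl⟩; exact hsC2 k⟩
  refine ⟨⨆ k, s k, tendsto_atTop_ciSup hsmono hbdd, ?_⟩
  exact ciSup_le hsC2
end

section
/- Let C1, C2 be real numbers with 0 ≤ C1 ≤ 1 and 0 ≤ C2 ≤ 1, and let s, t : ℕ → ℝ be the SimRank iterates on K_{2,2} (s 0 = 0, t 0 = 0, s (k+1) = (C2/2)·(1 + t k), t (k+1) = (C1/2)·(1 + s k)). Then for every k ≥ 1, s k ≤ C2; that is, the iteration-k SimRank similarity of the two ads in K_{1,2}, which equals C2 for every k ≥ 1, is at least the iteration-k SimRank similarity of the two ads in K_{2,2}. -/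
theorem simrank_K22_le_K12
    (C1 C2 : ℝ) (hC1 : 0 ≤ C1) (hC1' : C1 ≤ 1) (hC2 : 0 ≤ C2) (hC2' : C2 ≤ 1)
    (s t : ℕ → ℝ)
    (hs0 : s 0 = 0) (ht0 : t 0 = 0)
    (hs : ∀ k, s (k + 1) = (C2 / 2) * (1 + t k))
    (ht : ∀ k, t (k + 1) = (C1 / 2) * (1 + s k)) :
    ∀ k : ℕ, 1 ≤ k → s k ≤ C2 := by
  have key : ∀ k, s k ≤ 1 ∧ t k ≤ 1 := by
    intro k
    induction k with
    | zero => simp [hs0, ht0]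
    | succ n ih =>
      constructor
      · rw [hs]; nlinarith [ih.2]
      · rw [ht]; nlinarith [ih.1]
  intro k hk
  obtain ⟨n, rfl⟩ := Nat.exists_eq_add_of_le hk
  rw [Nat.add_comm, hs]
  nlinarith [(key n).2]
end

section
/- Let C1, C2 be real numbers with 0 < C1 ≤ 1 and 0 < C2 ≤ 1, and let s, t : ℕ → ℝ be the SimRank iterates on K_{2,2} (s 0 = 0, t 0 = 0, s (k+1) = (C2/2)·(1 + t k), t (k+1) = (C1/2)·(1 + s k)). Then the sequence s converges to C2 (the common value sim^(k)(A,B) = C2 of the K_{1,2} scores) if and only if C1 = 1 and C2 = 1. -/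
theorem simrank_K22_limit_eq_iff
    (C1 C2 : ℝ) (hC1 : 0 < C1) (hC1' : C1 ≤ 1) (hC2 : 0 < C2) (hC2' : C2 ≤ 1)
    (s t : ℕ → ℝ)
    (hs0 : s 0 = 0) (ht0 : t 0 = 0)
    (hs : ∀ k, s (k + 1) = (C2 / 2) * (1 + t k))
    (ht : ∀ k, t (k + 1) = (C1 / 2) * (1 + s k)) :
    Filter.Tendsto s Filter.atTop (nhds C2) ↔ (C1 = 1 ∧ C2 = 1) := by
  have hd : (0:ℝ) < 1 - C1 * C2 / 4 := by nlinarith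
  set d : ℝ := 1 - C1 * C2 / 4 with hd_def
  set L : ℝ := (C2 / 2 + C1 * C2 / 4) / d with hL_def
  set M : ℝ := (C1 / 2) * (1 + L) with hM_def
  have hLfix : L = (C2 / 2) * (1 + M) := by
    rw [hM_def, hL_def]
    field_simp
    ring
  have hMfix : M = (C1 / 2) * (1 + L) := hM_def
  -- contraction estimate
  have key : ∀ k, |s k - L| + |t k - M| ≤ (|s 0 - L| + |t 0 - M|) * (1/2)^k := by
    intro k
    induction k with
    | zero => simp
    | succ n ih =>
      have e1 : |s (n+1) - L| = (C2 / 2) * |t n - M| := by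
        rw [hs n]
        have : (C2 / 2) * (1 + t n) - L = (C2/2) * (t n - M) := by
          rw [hLfix]; ring
        rw [this, abs_mul, abs_of_pos (by linarith)]
      have e2 : |t (n+1) - M| = (C1 / 2) * |s n - L| := by
        rw [ht n]
        have : (C1 / 2) * (1 + s n) - M = (C1/2) * (s n - L) := by
          rw [hMfix]; ring
        rw [this, abs_mul, abs_of_pos (by linarith)]
      have h1 : (C2 / 2) * |t n - M| ≤ (1/2) * |t n - M| := by
        apply mul_le_mul_of_nonneg_right (by linarith) (abs_nonneg _)
      have h2 : (C1 / 2) * |s n - L| ≤ (1/2) * |s n - L| := by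
        apply mul_le_mul_of_nonneg_right (by linarith) (abs_nonneg _)
      calc |s (n+1) - L| + |t (n+1) - M|
          ≤ (1/2) * (|s n - L| + |t n - M|) := by rw [e1, e2]; linarith
        _ ≤ (1/2) * ((|s 0 - L| + |t 0 - M|) * (1/2)^n) := by
            apply mul_le_mul_of_nonneg_left ih (by norm_num)
        _ = (|s 0 - L| + |t 0 - M|) * (1/2)^(n+1) := by ring
  -- s tends to L
  have hsL : Filter.Tendsto s Filter.atTop (nhds L) := by
    have h0 : Filter.Tendsto (fun k => (|s 0 - L| + |t 0 - M|) * (1/2:ℝ)^k)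
        Filter.atTop (nhds 0) := by
      have := tendsto_pow_atTop_nhds_zero_of_lt_one (by norm_num : (0:ℝ) ≤ 1/2)
        (by norm_num : (1/2:ℝ) < 1)
      simpa using this.const_mul (|s 0 - L| + |t 0 - M|)
    have hb : ∀ k, ‖s k - L‖ ≤ (|s 0 - L| + |t 0 - M|) * (1/2:ℝ)^k := by
      intro k
      have := key k
      have := abs_nonneg (t k - M)
      simp only [Real.norm_eq_abs]
      linarith
    have := squeeze_zero_norm hb h0
    have h2 : Filter.Tendsto (fun k => s k - L + L) Filter.atTop (nhds (0 + L)) :=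
      this.add_const L
    simpa using h2
  constructor
  · intro hC
    have hLC2 : L = C2 := tendsto_nhds_unique hsL hC
    have heq : C1 * C2 + C1 = 2 := by
      rw [hL_def] at hLC2
      field_simp at hLC2
      rw [hd_def] at hLC2
      nlinarith [hLC2, mul_pos hC2 hC2]
    have h1 : C1 = 1 := by nlinarith
    have h2 : C2 = 1 := by nlinarith
    exact ⟨h1, h2⟩
  · rintro ⟨h1, h2⟩
    have : L = C2 := by
      rw [hL_def, hd_def, h1, h2]; norm_num
    rwa [this] at hsL
end

section
/- Let C1, C2 be real numbers with 0 < C1 ≤ 1 and 0 < C2 ≤ 1 such that C1 < 1 or C2 < 1, and let s, t : ℕ → ℝ be the SimRank iterates on K_{2,2} (s 0 = 0, t 0 = 0, s (k+1) = (C2/2)·(1 + t k), t (k+1) = (C1/2)·(1 + s k)). Then for every k ≥ 1, s k < C2; that is, the iteration-k SimRank similarity of the two ads in K_{1,2} (which equals C2) is strictly greater than that of the two ads in K_{2,2}. -/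
theorem simrank_K22_lt_K12
    (C1 C2 : ℝ) (hC1 : 0 < C1) (hC1' : C1 ≤ 1) (hC2 : 0 < C2) (hC2' : C2 ≤ 1)
    (hlt : C1 < 1 ∨ C2 < 1)
    (s t : ℕ → ℝ)
    (hs0 : s 0 = 0) (ht0 : t 0 = 0)
    (hs : ∀ k, s (k + 1) = (C2 / 2) * (1 + t k))
    (ht : ∀ k, t (k + 1) = (C1 / 2) * (1 + s k)) :
    ∀ k : ℕ, 1 ≤ k → s k < C2 := by
  have key : ∀ k, s k < 1 ∧ t k < 1 := by
    intro k
    induction k with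
    | zero => rw [hs0, ht0]; norm_num
    | succ n ih =>
      constructor
      · rw [hs n]; nlinarith [ih.2]
      · rw [ht n]; nlinarith [ih.1]
  intro k hk
  obtain ⟨m, rfl⟩ := Nat.exists_eq_add_of_le hk
  rw [add_comm 1 m, hs m]
  nlinarith [(key m).2]
end

section
/- Let C1, C2 be real numbers with 0 < C1 ≤ 1 and 0 < C2 ≤ 1 such that C1 < 1 or C2 < 1, and let s, t : ℕ → ℝ be the SimRank iterates on K_{2,2} (s 0 = 0, t 0 = 0, s (k+1) = (C2/2)·(1 + t k), t (k+1) = (C1/2)·(1 + s k)). Then the sequence s converges to some limit L ∈ ℝ with L < C2; that is, the limiting SimRank similarity of the two ads in K_{1,2} (which equals C2) is strictly greater than the limiting SimRank similarity of the two ads in K_{2,2}. -/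
/-!
Two steps of the recursion give `s (k + 2) - L = (C1 * C2 / 4) * (s k - L)` for the fixed point
`L = C2 * (2 + C1) / (4 - C1 * C2)`, and `0 < C1 * C2 / 4 ≤ 1 / 4`, so the even and the odd
iterates both converge geometrically to `L`. Finally `L < C2` amounts to `C1 * (1 + C2) < 2`,
which holds because `C1, C2 ≤ 1` with one of them strict.
-/

open Filter Topology

section TwoStepContraction

variable {𝕜 : Type*} [NormedField 𝕜] {u : ℕ → 𝕜} {q L : 𝕜}

theorem sub_eq_pow_mul_of_add_two_sub_eq_mul (h : ∀ k, u (k + 2) - L = q * (u k - L)) (k : ℕ) :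
    u k - L = q ^ (k / 2) * (u (k % 2) - L) := by
  have two_mul_add : ∀ n i, u (2 * n + i) - L = q ^ n * (u i - L) := by
    intro n i
    induction n with
    | zero => simp
    | succ n ih =>
      rw [show 2 * (n + 1) + i = 2 * n + i + 2 by ring, h, ih, pow_succ']
      ring
  conv_lhs => rw [← Nat.div_add_mod k 2]
  exact two_mul_add _ _

theorem tendsto_of_add_two_sub_eq_mul (hq : ‖q‖ < 1) (h : ∀ k, u (k + 2) - L = q * (u k - L)) :
    Tendsto u atTop (𝓝 L) := by
  set M := ‖u 0 - L‖ + ‖u 1 - L‖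
  have bound : ∀ k, ‖u k - L‖ ≤ ‖q‖ ^ (k / 2) * M := by
    intro k
    rw [sub_eq_pow_mul_of_add_two_sub_eq_mul h k, norm_mul, norm_pow]
    gcongr
    rcases Nat.mod_two_eq_zero_or_one k with hk | hk <;> simp [M, hk]
  have pow_half : Tendsto (fun k : ℕ => ‖q‖ ^ (k / 2) * M) atTop (𝓝 0) := by
    simpa using ((tendsto_pow_atTop_nhds_zero_of_lt_one (norm_nonneg q) hq).comp
      (Nat.tendsto_div_const_atTop two_ne_zero)).mul_const M
  exact tendsto_sub_nhds_zero_iff.mp (squeeze_zero_norm bound pow_half)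

end TwoStepContraction

section SimRankK22

variable {C1 C2 : ℝ} {s t : ℕ → ℝ}

noncomputable def simrankLimitK22 (C1 C2 : ℝ) : ℝ := C2 * (2 + C1) / (4 - C1 * C2)

theorem simrank_add_two_sub_limitK22 (hden : 4 - C1 * C2 ≠ 0)
    (hs : ∀ k, s (k + 1) = (C2 / 2) * (1 + t k)) (ht : ∀ k, t (k + 1) = (C1 / 2) * (1 + s k))
    (k : ℕ) :
    s (k + 2) - simrankLimitK22 C1 C2 = C1 * C2 / 4 * (s k - simrankLimitK22 C1 C2) := by
  rw [hs (k + 1), ht k, simrankLimitK22]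
  linear_combination (-1 / 4 : ℝ) * div_mul_cancel₀ (C2 * (2 + C1)) hden

theorem simrankLimitK22_lt (hC1' : C1 ≤ 1) (hC2 : 0 < C2) (hC2' : C2 ≤ 1)
    (hlt : C1 < 1 ∨ C2 < 1) : simrankLimitK22 C1 C2 < C2 := by
  have hden : 0 < 4 - C1 * C2 := by nlinarith
  have hC1C2 : C1 * (1 + C2) < 2 := by
    rcases hlt with h | h <;> nlinarith
  rw [simrankLimitK22, div_lt_iff₀ hden]
  nlinarith

end SimRankK22

theorem simrank_K22_limit_lt_K12_general
    (C1 C2 : ℝ) (hC1 : 0 < C1) (hC1' : C1 ≤ 1) (hC2 : 0 < C2) (hC2' : C2 ≤ 1)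
    (hlt : C1 < 1 ∨ C2 < 1)
    (s t : ℕ → ℝ)
    (hs : ∀ k, s (k + 1) = (C2 / 2) * (1 + t k))
    (ht : ∀ k, t (k + 1) = (C1 / 2) * (1 + s k)) :
    ∃ L : ℝ, Filter.Tendsto s Filter.atTop (nhds L) ∧ L < C2 := by
  have hprod : 0 < C1 * C2 ∧ C1 * C2 ≤ 1 := ⟨by positivity, by nlinarith⟩
  have hq : ‖C1 * C2 / 4‖ < 1 := by
    rw [Real.norm_eq_abs, abs_lt]
    constructor <;> linarith
  refine ⟨simrankLimitK22 C1 C2, tendsto_of_add_two_sub_eq_mul hq ?_,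
    simrankLimitK22_lt hC1' hC2 hC2' hlt⟩
  exact simrank_add_two_sub_limitK22 (by linarith) hs ht

theorem simrank_K22_limit_lt_K12
    (C1 C2 : ℝ) (hC1 : 0 < C1) (hC1' : C1 ≤ 1) (hC2 : 0 < C2) (hC2' : C2 ≤ 1)
    (hlt : C1 < 1 ∨ C2 < 1)
    (s t : ℕ → ℝ)
    (hs0 : s 0 = 0) (ht0 : t 0 = 0)
    (hs : ∀ k, s (k + 1) = (C2 / 2) * (1 + t k))
    (ht : ∀ k, t (k + 1) = (C1 / 2) * (1 + s k)) :
    ∃ L : ℝ, Filter.Tendsto s Filter.atTop (nhds L) ∧ L < C2 :=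
  simrank_K22_limit_lt_K12_general C1 C2 hC1 hC1' hC2 hC2' hlt s t hs ht
end

section
/- Let C1, C2 be real numbers with 0 < C1 ≤ 1 and 0 < C2 ≤ 1, let m, n be natural numbers with 1 ≤ m < n, and let (s_m, t_m) and (s_n, t_n) be the SimRank iterates on K_{m,2} and K_{n,2} respectively (s_m 0 = t_m 0 = 0, s_m (k+1) = C2·(1 + (m-1)·t_m k)/m, t_m (k+1) = (C1/2)·(1 + s_m k), and analogously with n in place of m). Then for every k ≥ 1, s_m k > s_n k. -/
theorem simrank_Km2_gt_Kn2
    (C1 C2 : ℝ) (hC1 : 0 < C1) (hC1' : C1 ≤ 1) (hC2 : 0 < C2) (hC2' : C2 ≤ 1)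
    (m n : ℕ) (hm : 1 ≤ m) (hmn : m < n)
    (sm tm sn tn : ℕ → ℝ)
    (hsm0 : sm 0 = 0) (htm0 : tm 0 = 0)
    (hsm : ∀ k, sm (k + 1) = C2 * (1 + ((m : ℝ) - 1) * tm k) / m)
    (htm : ∀ k, tm (k + 1) = (C1 / 2) * (1 + sm k))
    (hsn0 : sn 0 = 0) (htn0 : tn 0 = 0)
    (hsn : ∀ k, sn (k + 1) = C2 * (1 + ((n : ℝ) - 1) * tn k) / n)
    (htn : ∀ k, tn (k + 1) = (C1 / 2) * (1 + sn k)) :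
    ∀ k : ℕ, 1 ≤ k → sm k > sn k := by
  have hm1 : (1 : ℝ) ≤ (m : ℝ) := by exact_mod_cast hm
  have hn2 : (2 : ℝ) ≤ (n : ℝ) := by exact_mod_cast hmn.trans_le' hm
  have hmn' : (m : ℝ) < (n : ℝ) := by exact_mod_cast hmn
  have hmpos : (0 : ℝ) < m := by linarith
  have hnpos : (0 : ℝ) < n := by linarith
  -- bounds on sn, tn
  have hb : ∀ k, 0 ≤ sn k ∧ sn k < 1 ∧ 0 ≤ tn k ∧ tn k < 1 := by
    intro k
    induction k with
    | zero => simp [hsn0, htn0]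
    | succ k ih =>
      obtain ⟨h1, h2, h3, h4⟩ := ih
      refine ⟨?_, ?_, ?_, ?_⟩
      · rw [hsn k]
        have : 0 ≤ 1 + ((n : ℝ) - 1) * tn k := by nlinarith
        positivity
      · rw [hsn k, div_lt_one hnpos]
        nlinarith [mul_pos hC2 (mul_pos (by linarith : (0:ℝ) < (n:ℝ) - 1)
          (by linarith : (0:ℝ) < 1 - tn k))]
      · rw [htn k]; nlinarith
      · rw [htn k]; nlinarith
  -- bound on tm (nonneg needed)
  have hbm : ∀ k, 0 ≤ sm k ∧ 0 ≤ tm k := by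
    intro k
    induction k with
    | zero => simp [hsm0, htm0]
    | succ k ih =>
      obtain ⟨h1, h2⟩ := ih
      constructor
      · rw [hsm k]
        have : 0 ≤ 1 + ((m : ℝ) - 1) * tm k := by nlinarith
        positivity
      · rw [htm k]; nlinarith
  have key : ∀ k, sm (k + 1) > sn (k + 1) ∧ tm (k + 1) ≥ tn (k + 1) := by
    intro k
    induction k with
    | zero =>
      constructor
      · rw [hsm 0, hsn 0, htm0, htn0, gt_iff_lt, div_lt_div_iff₀ hnpos hmpos]
        nlinarith
      · rw [htm 0, htn 0, hsm0, hsn0]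
    | succ k ih =>
      obtain ⟨ih1, ih2⟩ := ih
      obtain ⟨_, _, htn0', htn1⟩ := hb (k + 1)
      obtain ⟨_, htm0'⟩ := hbm (k + 1)
      constructor
      · rw [hsm (k+1), hsn (k+1), gt_iff_lt, div_lt_div_iff₀ hnpos hmpos]
        nlinarith [mul_pos hC2 (mul_pos (by linarith : (0:ℝ) < (n:ℝ) - (m:ℝ))
            (by linarith : (0:ℝ) < 1 - tn (k+1))),
          mul_nonneg (mul_nonneg (mul_nonneg hC2.le (by linarith : (0:ℝ) ≤ tm (k+1) - tn (k+1)))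
            (by linarith : (0:ℝ) ≤ (m:ℝ) - 1)) hnpos.le]
      · rw [htm (k+1), htn (k+1)]
        nlinarith
  intro k hk
  obtain ⟨j, rfl⟩ := Nat.exists_eq_add_of_le hk
  rw [add_comm]
  exact (key j).1
end

section
/- Let C1, C2 be real numbers with 0 < C1 ≤ 1 and 0 < C2 ≤ 1, let m, n be natural numbers with 1 ≤ m < n, and let (s_m, t_m) and (s_n, t_n) be the SimRank iterates on K_{m,2} and K_{n,2} respectively (s_m 0 = t_m 0 = 0, s_m (k+1) = C2·(1 + (m-1)·t_m k)/m, t_m (k+1) = (C1/2)·(1 + s_m k), and analogously with n in place of m). Then the sequences s_m and s_n converge to limits L_m and L_n respectively, and L_m = L_n if and only if C1 = 1 and C2 = 1. -/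
/-!
Both SimRank iterations are affine maps with contracting linear part: if `(L, T)` is the fixed
point, then `s (k + 1) - L = a (t k - T)` and `t (k + 1) - T = c (s k - L)` with `|a|, |c| < 1`,
so `|s k - L| + |t k - T|` decays geometrically. Solving the
fixed-point equations on `K_{m,2}` gives `L_m = C2 ((m - 1) C1 + 2) / (2m - (m - 1) C1 C2)`, and
`L_m - L_n` is `2 C2 (n - m) (2 - C1 - C1 C2)` over a positive denominator. For decay factors in
`(0, 1]` the factor `2 - C1 - C1 C2` vanishes only at `C1 = C2 = 1`.
-/

open Filter Topology

lemma one_sub_mul_ne_zero_of_abs_lt_one {a c : ℝ} (ha : |a| < 1) (hc : |c| < 1) :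
    1 - a * c ≠ 0 := by
  have hac : a * c < 1 := (le_abs_self _).trans_lt <| by
    rw [abs_mul]
    exact mul_lt_one_of_nonneg_of_lt_one_right ha.le (abs_nonneg c) hc
  exact (sub_pos.mpr hac).ne'

lemma tendsto_of_coupled_affine {a b c d : ℝ} (ha : |a| < 1) (hc : |c| < 1) {s t : ℕ → ℝ}
    (hs : ∀ k, s (k + 1) = a * t k + b) (ht : ∀ k, t (k + 1) = c * s k + d) :
    Tendsto s atTop (𝓝 ((a * d + b) / (1 - a * c))) := by
  have hac := one_sub_mul_ne_zero_of_abs_lt_one ha hc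
  set L := (a * d + b) / (1 - a * c)
  set T := c * L + d
  have hL : L = a * T + b := by
    simp only [L, T]
    field_simp
    ring
  set r := max |a| |c|
  set e : ℕ → ℝ := fun k => |s k - L| + |t k - T|
  have he : ∀ k, e (k + 1) ≤ r * e k := by
    intro k
    have hs' : |s (k + 1) - L| = |a| * |t k - T| := by
      rw [hs, hL, ← abs_mul, mul_sub, add_sub_add_right_eq_sub]
    have ht' : |t (k + 1) - T| = |c| * |s k - L| := by
      rw [ht, ← abs_mul, mul_sub, add_sub_add_right_eq_sub]
    simp only [e, hs', ht', mul_add, add_comm (|a| * _)]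
    gcongr
    exacts [le_max_right _ _, le_max_left _ _]
  have hgeom : Tendsto (fun k => r ^ k * e 0) atTop (𝓝 0) := by
    simpa using (tendsto_pow_atTop_nhds_zero_of_lt_one (by positivity) (max_lt ha hc)).mul_const
      (e 0)
  have herr : Tendsto (fun k => |s k - L|) atTop (𝓝 0) :=
    squeeze_zero (fun _ => abs_nonneg _)
      (fun k => (le_add_of_nonneg_right (abs_nonneg _)).trans
        (le_geom (by positivity) k fun j _ => he j)) hgeom
  rw [tendsto_iff_norm_sub_tendsto_zero]
  simpa only [Real.norm_eq_abs] using herr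

noncomputable def simrankLimit (C1 C2 m : ℝ) : ℝ :=
  C2 * ((m - 1) * C1 + 2) / (2 * m - (m - 1) * C1 * C2)

lemma tendsto_simrankLimit {C1 C2 : ℝ} (hC1 : |C1| < 2) (hC2 : |C2| ≤ 1) {m : ℕ} (hm : 0 < m)
    {s t : ℕ → ℝ} (hs : ∀ k, s (k + 1) = C2 * (1 + ((m : ℝ) - 1) * t k) / m)
    (ht : ∀ k, t (k + 1) = (C1 / 2) * (1 + s k)) :
    Tendsto s atTop (𝓝 (simrankLimit C1 C2 m)) := by
  have hm' : (0 : ℝ) < m := Nat.cast_pos.mpr hm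
  have hm1 : (1 : ℝ) ≤ m := Nat.one_le_cast.mpr hm
  have hfrac : |((m : ℝ) - 1) / m| < 1 := by
    rw [abs_of_nonneg (div_nonneg (sub_nonneg.mpr hm1) hm'.le), div_lt_one hm']
    linarith
  have ha : |C2 * ((m - 1) / m)| < 1 := by
    rw [abs_mul]
    exact mul_lt_one_of_nonneg_of_lt_one_right hC2 (abs_nonneg _) hfrac
  have hc : |C1 / 2| < 1 := by rw [abs_div, abs_two]; linarith
  have hlim := tendsto_of_coupled_affine ha hc (b := C2 / m) (d := C1 / 2) (s := s) (t := t)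
    (fun k => by rw [hs]; ring) (fun k => by rw [ht]; ring)
  convert hlim using 2
  rw [← mul_div_mul_left _ _ (by positivity : (2 * m : ℝ) ≠ 0), simrankLimit]
  congr 1 <;> field_simp

lemma simrankLimit_sub_simrankLimit {C1 C2 m n : ℝ} (hm : 2 * m - (m - 1) * C1 * C2 ≠ 0)
    (hn : 2 * n - (n - 1) * C1 * C2 ≠ 0) :
    simrankLimit C1 C2 m - simrankLimit C1 C2 n =
      2 * C2 * (n - m) * (2 - C1 - C1 * C2) /
        ((2 * m - (m - 1) * C1 * C2) * (2 * n - (n - 1) * C1 * C2)) := by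
  rw [simrankLimit, simrankLimit, div_sub_div _ _ hm hn]
  ring

lemma simrankLimit_denom_pos {C1 C2 m : ℝ} (hC : 0 ≤ C1 * C2) (hC' : C1 * C2 ≤ 1) (hm : 0 < m) :
    0 < 2 * m - (m - 1) * C1 * C2 := by
  nlinarith

lemma simrankLimit_eq_simrankLimit_iff {C1 C2 m n : ℝ} (hC1 : 0 ≤ C1) (hC1' : C1 ≤ 1)
    (hC2 : 0 < C2) (hC2' : C2 ≤ 1) (hm : 0 < m) (hn : 0 < n) (hmn : m ≠ n) :
    simrankLimit C1 C2 m = simrankLimit C1 C2 n ↔ C1 = 1 ∧ C2 = 1 := by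
  have hC : 0 ≤ C1 * C2 := mul_nonneg hC1 hC2.le
  have hC' : C1 * C2 ≤ 1 := mul_le_one₀ hC1' hC2.le hC2'
  have hDm := (simrankLimit_denom_pos hC hC' hm).ne'
  have hDn := (simrankLimit_denom_pos hC hC' hn).ne'
  rw [← sub_eq_zero, simrankLimit_sub_simrankLimit hDm hDn, div_eq_zero_iff]
  simp only [mul_eq_zero, two_ne_zero, hC2.ne', sub_eq_zero, hmn.symm, hDm, hDn, false_or,
    or_false]
  constructor
  · intro h
    have hC1_eq : C1 = 1 := by nlinarith
    exact ⟨hC1_eq, by subst hC1_eq; linarith⟩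
  · rintro ⟨rfl, rfl⟩
    norm_num

theorem simrank_Km2_Kn2_limits_eq_iff_general
    (C1 C2 : ℝ) (hC1 : 0 < C1) (hC1' : C1 ≤ 1) (hC2 : 0 < C2) (hC2' : C2 ≤ 1)
    (m n : ℕ) (hm : 1 ≤ m) (hmn : m < n)
    (sm tm sn tn : ℕ → ℝ)
    (hsm : ∀ k, sm (k + 1) = C2 * (1 + ((m : ℝ) - 1) * tm k) / m)
    (htm : ∀ k, tm (k + 1) = (C1 / 2) * (1 + sm k))
    (hsn : ∀ k, sn (k + 1) = C2 * (1 + ((n : ℝ) - 1) * tn k) / n)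
    (htn : ∀ k, tn (k + 1) = (C1 / 2) * (1 + sn k)) :
    ∃ Lm Ln : ℝ,
      Filter.Tendsto sm Filter.atTop (nhds Lm) ∧
      Filter.Tendsto sn Filter.atTop (nhds Ln) ∧
      (Lm = Ln ↔ (C1 = 1 ∧ C2 = 1)) := by
  have hC1_abs : |C1| < 2 := abs_lt.mpr ⟨by linarith, by linarith⟩
  have hC2_abs : |C2| ≤ 1 := abs_le.mpr ⟨by linarith, hC2'⟩
  have hn : 0 < n := Nat.zero_lt_of_lt hmn
  refine ⟨simrankLimit C1 C2 m, simrankLimit C1 C2 n,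
    tendsto_simrankLimit hC1_abs hC2_abs hm hsm htm,
    tendsto_simrankLimit hC1_abs hC2_abs hn hsn htn, ?_⟩
  exact simrankLimit_eq_simrankLimit_iff hC1.le hC1' hC2 hC2' (Nat.cast_pos.mpr hm)
    (Nat.cast_pos.mpr hn) (Nat.cast_lt.mpr hmn).ne

theorem simrank_Km2_Kn2_limits_eq_iff
    (C1 C2 : ℝ) (hC1 : 0 < C1) (hC1' : C1 ≤ 1) (hC2 : 0 < C2) (hC2' : C2 ≤ 1)
    (m n : ℕ) (hm : 1 ≤ m) (hmn : m < n)
    (sm tm sn tn : ℕ → ℝ)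
    (hsm0 : sm 0 = 0) (htm0 : tm 0 = 0)
    (hsm : ∀ k, sm (k + 1) = C2 * (1 + ((m : ℝ) - 1) * tm k) / m)
    (htm : ∀ k, tm (k + 1) = (C1 / 2) * (1 + sm k))
    (hsn0 : sn 0 = 0) (htn0 : tn 0 = 0)
    (hsn : ∀ k, sn (k + 1) = C2 * (1 + ((n : ℝ) - 1) * tn k) / n)
    (htn : ∀ k, tn (k + 1) = (C1 / 2) * (1 + sn k)) :
    ∃ Lm Ln : ℝ,
      Filter.Tendsto sm Filter.atTop (nhds Lm) ∧
      Filter.Tendsto sn Filter.atTop (nhds Ln) ∧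
      (Lm = Ln ↔ (C1 = 1 ∧ C2 = 1)) :=
  simrank_Km2_Kn2_limits_eq_iff_general C1 C2 hC1 hC1' hC2 hC2' m n hm hmn sm tm sn tn hsm htm hsn
    htn
end

section
/- Let C1, C2 be real numbers with 0 < C1 ≤ 1 and 0 < C2 ≤ 1, let m ≥ 1 be a natural number, and let (s_m, t_m) be the SimRank iterates on K_{m,2} (s_m 0 = t_m 0 = 0, s_m (k+1) = C2·(1 + (m-1)·t_m k)/m, t_m (k+1) = (C1/2)·(1 + s_m k)). Then the sequence s_m converges to (2·C2 + C1·C2·(m-1)) / (2·m − C1·C2·(m-1)). -/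
/-! Eliminating `t` gives a two-step affine recursion for `s` whose fixed point is the stated limit and whose
ratio `C1 * C2 * (m - 1) / (2 * m)` lies in `[0, 1)`: the error `s k - L` contracts by that ratio every two steps. -/

open Filter Topology

section TwoStep

variable {𝕜 E : Type*} [NormedField 𝕜] [NormedAddCommGroup E] [NormedSpace 𝕜 E]

theorem eq_pow_div_two_smul_of_two_step {d : ℕ → E} {r : 𝕜} (h : ∀ k, d (k + 2) = r • d k)
    (k : ℕ) : d k = r ^ (k / 2) • d (k % 2) := by
  induction k using Nat.twoStepInduction with
  | zero => simp
  | one => simp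
  | more k ih _ =>
    rw [h, ih, smul_smul, ← pow_succ', Nat.add_div_right k two_pos, Nat.add_mod_right]

theorem tendsto_zero_of_two_step {d : ℕ → E} {r : 𝕜} (hr : ‖r‖ < 1)
    (h : ∀ k, d (k + 2) = r • d k) : Tendsto d atTop (𝓝 0) := by
  have hpow : Tendsto (fun k ↦ ‖r‖ ^ (k / 2) * (‖d 0‖ + ‖d 1‖)) atTop (𝓝 0) := by
    simpa using ((tendsto_pow_atTop_nhds_zero_of_lt_one (norm_nonneg r) hr).comp
      (Nat.tendsto_div_const_atTop two_ne_zero)).mul_const (‖d 0‖ + ‖d 1‖)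
  refine squeeze_zero_norm (fun k ↦ ?_) hpow
  rw [eq_pow_div_two_smul_of_two_step h k, norm_smul, norm_pow]
  gcongr
  rcases Nat.mod_two_eq_zero_or_one k with hk | hk <;> rw [hk] <;> simp

theorem tendsto_of_two_step {u : ℕ → E} {L : E} {r : 𝕜} (hr : ‖r‖ < 1)
    (h : ∀ k, u (k + 2) - L = r • (u k - L)) : Tendsto u atTop (𝓝 L) :=
  tendsto_sub_nhds_zero_iff.mp (tendsto_zero_of_two_step hr h)

end TwoStep

theorem simrank_sub_two_step {C1 C2 L : ℝ} {m : ℕ} (hm : (m : ℝ) ≠ 0)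
    (hL : L * (2 * m - C1 * C2 * ((m : ℝ) - 1)) = 2 * C2 + C1 * C2 * ((m : ℝ) - 1))
    {sm tm : ℕ → ℝ} (hsm : ∀ k, sm (k + 1) = C2 * (1 + ((m : ℝ) - 1) * tm k) / m)
    (htm : ∀ k, tm (k + 1) = (C1 / 2) * (1 + sm k)) (k : ℕ) :
    sm (k + 2) - L = C1 * C2 * ((m : ℝ) - 1) / (2 * m) * (sm k - L) := by
  rw [hsm, htm]
  field_simp
  linear_combination -hL

theorem simrank_Km2_limit_general
    (C1 C2 : ℝ) (hC1 : 0 < C1) (hC1' : C1 ≤ 1) (hC2 : 0 < C2) (hC2' : C2 ≤ 1)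
    (m : ℕ) (hm : 1 ≤ m)
    (sm tm : ℕ → ℝ)
    (hsm : ∀ k, sm (k + 1) = C2 * (1 + ((m : ℝ) - 1) * tm k) / m)
    (htm : ∀ k, tm (k + 1) = (C1 / 2) * (1 + sm k)) :
    Filter.Tendsto sm Filter.atTop
      (nhds ((2 * C2 + C1 * C2 * ((m : ℝ) - 1)) /
             (2 * (m : ℝ) - C1 * C2 * ((m : ℝ) - 1)))) := by
  have hm1 : (1 : ℝ) ≤ m := by exact_mod_cast hm
  have hC : 0 < C1 * C2 := mul_pos hC1 hC2
  have hC' : C1 * C2 ≤ 1 := mul_le_one₀ hC1' hC2.le hC2'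
  have hnum : 0 ≤ C1 * C2 * ((m : ℝ) - 1) := mul_nonneg hC.le (by linarith)
  have hlt : C1 * C2 * ((m : ℝ) - 1) < 2 * m := by nlinarith
  refine tendsto_of_two_step (r := C1 * C2 * ((m : ℝ) - 1) / (2 * m)) ?_
    (simrank_sub_two_step (by positivity) (div_mul_cancel₀ _ (by linarith)) hsm htm)
  rw [Real.norm_eq_abs, abs_of_nonneg (by positivity), div_lt_one (by positivity)]
  exact hlt

theorem simrank_Km2_limit
    (C1 C2 : ℝ) (hC1 : 0 < C1) (hC1' : C1 ≤ 1) (hC2 : 0 < C2) (hC2' : C2 ≤ 1)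
    (m : ℕ) (hm : 1 ≤ m)
    (sm tm : ℕ → ℝ)
    (hsm0 : sm 0 = 0) (htm0 : tm 0 = 0)
    (hsm : ∀ k, sm (k + 1) = C2 * (1 + ((m : ℝ) - 1) * tm k) / m)
    (htm : ∀ k, tm (k + 1) = (C1 / 2) * (1 + sm k)) :
    Filter.Tendsto sm Filter.atTop
      (nhds ((2 * C2 + C1 * C2 * ((m : ℝ) - 1)) /
             (2 * (m : ℝ) - C1 * C2 * ((m : ℝ) - 1)))) :=
  simrank_Km2_limit_general C1 C2 hC1 hC1' hC2 hC2' m hm sm tm hsm htm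
end

section
/- Let C1, C2 be real numbers with 0 ≤ C1 ≤ 1 and 0 ≤ C2 ≤ 1, and let s, t : ℕ → ℝ be the SimRank iterates on K_{2,2} (s 0 = 0, t 0 = 0, s (k+1) = (C2/2)·(1 + t k), t (k+1) = (C1/2)·(1 + s k)). Then the series Σ_{i=1}^{∞} (1/2)^{i-1} · C1^{⌊i/2⌋} · C2^{⌊(i-1)/2⌋} converges, and the sequence s converges to (C2/2) times its sum. -/
theorem simrank_K22_series_limit
    (C1 C2 : ℝ) (hC1 : 0 ≤ C1) (hC1' : C1 ≤ 1) (hC2 : 0 ≤ C2) (hC2' : C2 ≤ 1)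
    (s t : ℕ → ℝ)
    (hs0 : s 0 = 0) (ht0 : t 0 = 0)
    (hs : ∀ k, s (k + 1) = (C2 / 2) * (1 + t k))
    (ht : ∀ k, t (k + 1) = (C1 / 2) * (1 + s k)) :
    Summable (fun i : ℕ =>
        (1 / 2 : ℝ) ^ ((i + 1) - 1) * C1 ^ ((i + 1) / 2) * C2 ^ (((i + 1) - 1) / 2)) ∧
    Filter.Tendsto s Filter.atTop
      (nhds ((C2 / 2) * ∑' i : ℕ,
        (1 / 2 : ℝ) ^ ((i + 1) - 1) * C1 ^ ((i + 1) / 2) * C2 ^ (((i + 1) - 1) / 2))) := by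
  set a : ℕ → ℝ := fun i => (1 / 2 : ℝ) ^ i * C1 ^ ((i + 1) / 2) * C2 ^ (i / 2) with ha
  set b : ℕ → ℝ := fun i => (1 / 2 : ℝ) ^ i * C2 ^ ((i + 1) / 2) * C1 ^ (i / 2) with hb
  have hfa : (fun i : ℕ =>
      (1 / 2 : ℝ) ^ ((i + 1) - 1) * C1 ^ ((i + 1) / 2) * C2 ^ (((i + 1) - 1) / 2)) = a := by
    funext i; simp [ha]
  have ha0 : a 0 = 1 := by norm_num [ha]
  have hb0 : b 0 = 1 := by norm_num [hb]
  have hab : ∀ i, a (i + 1) = (C1 / 2) * b i := by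
    intro i
    simp only [ha, hb]
    have h1 : (i + 1 + 1) / 2 = i / 2 + 1 := by omega
    rw [h1]; ring
  have hba : ∀ i, b (i + 1) = (C2 / 2) * a i := by
    intro i
    simp only [ha, hb]
    have h1 : (i + 1 + 1) / 2 = i / 2 + 1 := by omega
    rw [h1]; ring
  have key : ∀ k, s k = (C2 / 2) * ∑ i ∈ Finset.range k, a i ∧
                   t k = (C1 / 2) * ∑ i ∈ Finset.range k, b i := by
    intro k
    induction k with
    | zero => simp [hs0, ht0]
    | succ k ih =>
      constructor
      · rw [hs k, ih.2, Finset.sum_range_succ',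
          Finset.sum_congr rfl (fun i _ => hab i), ← Finset.mul_sum, ha0]
        ring
      · rw [ht k, ih.1, Finset.sum_range_succ',
          Finset.sum_congr rfl (fun i _ => hba i), ← Finset.mul_sum, hb0]
        ring
  have hsum : Summable a := by
    refine Summable.of_nonneg_of_le ?_ ?_
      (summable_geometric_of_lt_one (r := (1/2:ℝ)) (by norm_num) (by norm_num))
    · intro i; simp only [ha]; positivity
    · intro i
      simp only [ha]
      calc (1 / 2 : ℝ) ^ i * C1 ^ ((i + 1) / 2) * C2 ^ (i / 2)
          ≤ (1 / 2 : ℝ) ^ i * 1 * 1 := by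
            apply mul_le_mul
            · apply mul_le_mul_of_nonneg_left (pow_le_one₀ hC1 hC1') (by positivity)
            · exact pow_le_one₀ hC2 hC2'
            · positivity
            · positivity
        _ = (1 / 2 : ℝ) ^ i := by ring
  rw [hfa]
  refine ⟨hsum, ?_⟩
  have h1 := (hsum.hasSum.tendsto_sum_nat).const_mul (C2 / 2)
  exact h1.congr (fun k => (key k).1.symm)
end

section
/- Let C1, C2 be real numbers with 1/2 < C1 ≤ 1 and 1/2 < C2 ≤ 1, and let s, t : ℕ → ℝ be the SimRank iterates on K_{2,2} (s 0 = 0, t 0 = 0, s (k+1) = (C2/2)·(1 + t k), t (k+1) = (C1/2)·(1 + s k)). Then the sequence of evidence-based scores k ↦ (5/6)·s k converges to some limit L' ∈ ℝ with L' ≥ C2/2. -/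
theorem evidence_simrank_K22_limit_ge
    (C1 C2 : ℝ) (hC1 : 1 / 2 < C1) (hC1' : C1 ≤ 1) (hC2 : 1 / 2 < C2) (hC2' : C2 ≤ 1)
    (s t : ℕ → ℝ)
    (hs0 : s 0 = 0) (ht0 : t 0 = 0)
    (hs : ∀ k, s (k + 1) = (C2 / 2) * (1 + t k))
    (ht : ∀ k, t (k + 1) = (C1 / 2) * (1 + s k)) :
    ∃ L' : ℝ, Filter.Tendsto (fun k => (5 / 6 : ℝ) * s k) Filter.atTop (nhds L') ∧
      L' ≥ C2 / 2 := by
  have hC1pos : (0:ℝ) < C1 := lt_trans (by norm_num) hC1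
  have hC2pos : (0:ℝ) < C2 := lt_trans (by norm_num) hC2
  have hD : (0:ℝ) < 4 - C1 * C2 := by nlinarith
  set D : ℝ := 4 - C1 * C2 with hDdef
  set S : ℝ := C2 * (2 + C1) / D with hSdef
  set T : ℝ := C1 * (2 + C2) / D with hTdef
  have hfixS : S = (C2 / 2) * (1 + T) := by
    rw [hSdef, hTdef]; field_simp; ring
  have hfixT : T = (C1 / 2) * (1 + S) := by
    rw [hSdef, hTdef]; field_simp; ring
  set M : ℝ := max |S| |T| with hMdef
  have hbound : ∀ k, |s k - S| ≤ M * (1/2)^k ∧ |t k - T| ≤ M * (1/2)^k := by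
    intro k
    induction k with
    | zero =>
      simp only [pow_zero, mul_one, hs0, ht0, zero_sub, abs_neg]
      exact ⟨le_max_left _ _, le_max_right _ _⟩
    | succ k ih =>
      obtain ⟨ihs, iht⟩ := ih
      constructor
      · have h1 : s (k+1) - S = (C2/2) * (t k - T) := by
          rw [hs k, hfixS]; ring
        rw [h1, abs_mul, abs_of_nonneg (by linarith : (0:ℝ) ≤ C2/2)]
        calc C2/2 * |t k - T| ≤ (1/2) * (M * (1/2)^k) := by
              apply mul_le_mul (by linarith) iht (abs_nonneg _) (by norm_num)
          _ = M * (1/2)^(k+1) := by ring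
      · have h1 : t (k+1) - T = (C1/2) * (s k - S) := by
          rw [ht k, hfixT]; ring
        rw [h1, abs_mul, abs_of_nonneg (by linarith : (0:ℝ) ≤ C1/2)]
        calc C1/2 * |s k - S| ≤ (1/2) * (M * (1/2)^k) := by
              apply mul_le_mul (by linarith) ihs (abs_nonneg _) (by norm_num)
          _ = M * (1/2)^(k+1) := by ring
  have htend : Filter.Tendsto s Filter.atTop (nhds S) := by
    rw [tendsto_iff_norm_sub_tendsto_zero]
    have hlim : Filter.Tendsto (fun k : ℕ => M * (1/2)^k) Filter.atTop (nhds 0) := by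
      have := tendsto_pow_atTop_nhds_zero_of_lt_one (by norm_num : (0:ℝ) ≤ 1/2)
        (by norm_num : (1/2:ℝ) < 1)
      simpa using this.const_mul M
    exact squeeze_zero (fun k => norm_nonneg _) (fun k => (hbound k).1) hlim
  refine ⟨(5/6) * S, (htend.const_mul (5/6 : ℝ)), ?_⟩
  rw [ge_iff_le, ← sub_nonneg]
  have heq : (5/6) * S - C2/2 = (C2 * (5 * C1 + 3 * C1 * C2 - 2)) / (6 * D) := by
    rw [hSdef]; field_simp; ring
  rw [heq]
  have hin : (0:ℝ) < 5 * C1 + 3 * C1 * C2 - 2 := by nlinarith [mul_pos hC1pos hC2pos]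
  have hnum : (0:ℝ) ≤ C2 * (5 * C1 + 3 * C1 * C2 - 2) := (mul_pos hC2pos hin).le
  exact div_nonneg hnum (by linarith)
end

section
/- Let C1, C2 be real numbers with 1/2 < C1 ≤ 1 and 1/2 < C2 ≤ 1, and let s, t : ℕ → ℝ be the SimRank iterates on K_{2,2} (s 0 = 0, t 0 = 0, s (k+1) = (C2/2)·(1 + t k), t (k+1) = (C1/2)·(1 + s k)). Then for every k ≥ 2, (5/6)·s k > (1/2)·C2; that is, after more than one iteration the evidence-based SimRank score of the two ads of K_{2,2} is strictly greater than the evidence-based SimRank score (1/2)·C2 of the two ads of K_{1,2}. -/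
theorem evidence_simrank_K22_gt_K12
    (C1 C2 : ℝ) (hC1 : 1 / 2 < C1) (hC1' : C1 ≤ 1) (hC2 : 1 / 2 < C2) (hC2' : C2 ≤ 1)
    (s t : ℕ → ℝ)
    (hs0 : s 0 = 0) (ht0 : t 0 = 0)
    (hs : ∀ k, s (k + 1) = (C2 / 2) * (1 + t k))
    (ht : ∀ k, t (k + 1) = (C1 / 2) * (1 + s k)) :
    ∀ k : ℕ, 2 ≤ k → (5 / 6 : ℝ) * s k > (1 / 2 : ℝ) * C2 := by
  have hnn : ∀ k, 0 ≤ s k ∧ 0 ≤ t k := by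
    intro k
    induction k with
    | zero => simp [hs0, ht0]
    | succ n ih =>
      constructor
      · rw [hs]; nlinarith [ih.2]
      · rw [ht]; nlinarith [ih.1]
  intro k hk
  obtain ⟨m, rfl⟩ : ∃ m, k = m + 2 := ⟨k - 2, by omega⟩
  have h1 : t (m + 1) ≥ C1 / 2 := by
    rw [ht]; nlinarith [(hnn m).1]
  rw [hs]
  nlinarith
end

section
/- Let C1, C2 be real numbers with 1/2 < C1 ≤ 1 and 1/2 < C2 ≤ 1, and let s, t : ℕ → ℝ be the SimRank iterates on K_{2,2} (s 0 = 0, t 0 = 0, s (k+1) = (C2/2)·(1 + t k), t (k+1) = (C1/2)·(1 + s k)). Then the sequence of evidence-based scores k ↦ (5/6)·s k converges to some limit L' ∈ ℝ with L' > (1/2)·C2; that is, in the limit the evidence-based SimRank score of the two ads of K_{2,2} strictly exceeds the evidence-based SimRank score (1/2)·C2 of the two ads of K_{1,2}. -/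
/-!
The map `(s, t) ↦ (C2/2 · (1 + t), C1/2 · (1 + s))` is a contraction of ratio `max |C1| |C2| / 2`
in the sup distance, so the iterates converge to its unique fixed point, whose first coordinate
is `C2 (2 + C1) / (4 - C1 C2)`. The final inequality
`5/6 · C2 (2 + C1) / (4 - C1 C2) > C2 / 2` clears to `5 C1 + 3 C1 C2 > 2`.
-/

open Filter Topology

theorem tendsto_zero_of_abs_succ_le_mul_abs_swap {u v : ℕ → ℝ} {q : ℝ} (hq0 : 0 ≤ q)
    (hq1 : q < 1) (hu : ∀ k, |u (k + 1)| ≤ q * |v k|) (hv : ∀ k, |v (k + 1)| ≤ q * |u k|) :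
    Tendsto u atTop (𝓝 0) := by
  set e : ℕ → ℝ := fun k => max |u k| |v k|
  have he : ∀ k, e (k + 1) ≤ q * e k := fun k =>
    max_le ((hu k).trans (by gcongr; exact le_max_right _ _))
      ((hv k).trans (by gcongr; exact le_max_left _ _))
  have hgeom : Tendsto (fun k => q ^ k * e 0) atTop (𝓝 0) := by
    simpa using (tendsto_pow_atTop_nhds_zero_of_lt_one hq0 hq1).mul_const (e 0)
  exact squeeze_zero_norm (fun k => (le_max_left _ _).trans (le_geom hq0 k fun j _ => he j)) hgeom

/-- `simrankK22Limit C2 C1` is the limit of the ad-ad similarity on `K_{2,2}`, and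
`simrankK22Limit C1 C2` that of the query-query similarity. -/
noncomputable def simrankK22Limit (c c' : ℝ) : ℝ := c * (2 + c') / (4 - c * c')

theorem simrankK22Limit_eq {c c' : ℝ} (h : c * c' ≠ 4) :
    simrankK22Limit c c' = c / 2 * (1 + simrankK22Limit c' c) := by
  have hd : 4 - c * c' ≠ 0 := sub_ne_zero.mpr h.symm
  have hd' : 4 - c' * c ≠ 0 := by rwa [mul_comm]
  unfold simrankK22Limit
  field_simp
  ring

theorem tendsto_simrankK22Limit {C1 C2 : ℝ} (hC1 : |C1| < 2) (hC2 : |C2| < 2) {s t : ℕ → ℝ}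
    (hs : ∀ k, s (k + 1) = (C2 / 2) * (1 + t k)) (ht : ∀ k, t (k + 1) = (C1 / 2) * (1 + s k)) :
    Tendsto s atTop (𝓝 (simrankK22Limit C2 C1)) := by
  have hprod : |C2 * C1| < 4 := by
    rw [abs_mul]; nlinarith [abs_nonneg C1, abs_nonneg C2]
  have hC21 : C2 * C1 ≠ 4 := (abs_lt.mp hprod).2.ne
  have hC12 : C1 * C2 ≠ 4 := by rwa [mul_comm]
  set q := max |C1| |C2| / 2 with hq
  have hq0 : 0 ≤ q := by positivity
  have hq1 : q < 1 := by have := max_lt hC1 hC2; rw [hq]; linarith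
  have hs' : ∀ k, |s (k + 1) - simrankK22Limit C2 C1| ≤ q * |t k - simrankK22Limit C1 C2| := by
    intro k
    rw [hs, simrankK22Limit_eq hC21, ← mul_sub, add_sub_add_left_eq_sub, abs_mul, abs_div,
      abs_two, hq]
    gcongr
    exact le_max_right _ _
  have ht' : ∀ k, |t (k + 1) - simrankK22Limit C1 C2| ≤ q * |s k - simrankK22Limit C2 C1| := by
    intro k
    rw [ht, simrankK22Limit_eq hC12, ← mul_sub, add_sub_add_left_eq_sub, abs_mul, abs_div,
      abs_two, hq]
    gcongr
    exact le_max_left _ _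
  exact tendsto_sub_nhds_zero_iff.mp (tendsto_zero_of_abs_succ_le_mul_abs_swap hq0 hq1 hs' ht')

theorem half_mul_lt_five_sixths_mul_simrankK22Limit {C1 C2 : ℝ} (hC1 : 2 / 5 < C1) (hC2 : 0 < C2)
    (hprod : C1 * C2 < 4) : 1 / 2 * C2 < 5 / 6 * simrankK22Limit C2 C1 := by
  have hd : 0 < 4 - C2 * C1 := by linarith [mul_comm C1 C2]
  rw [simrankK22Limit, mul_div_assoc', lt_div_iff₀ hd]
  nlinarith [mul_pos hC2 (mul_pos (by linarith : 0 < C1) hC2)]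

theorem evidence_simrank_K22_limit_gt_K12_general
    (C1 C2 : ℝ) (hC1 : 1 / 2 < C1) (hC1' : C1 ≤ 1) (hC2 : 1 / 2 < C2) (hC2' : C2 ≤ 1)
    (s t : ℕ → ℝ)
    (hs : ∀ k, s (k + 1) = (C2 / 2) * (1 + t k))
    (ht : ∀ k, t (k + 1) = (C1 / 2) * (1 + s k)) :
    ∃ L' : ℝ, Filter.Tendsto (fun k => (5 / 6 : ℝ) * s k) Filter.atTop (nhds L') ∧
      L' > (1 / 2 : ℝ) * C2 := by
  have habs1 : |C1| < 2 := abs_lt.mpr ⟨by linarith, by linarith⟩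
  have habs2 : |C2| < 2 := abs_lt.mpr ⟨by linarith, by linarith⟩
  refine ⟨5 / 6 * simrankK22Limit C2 C1,
    (tendsto_simrankK22Limit habs1 habs2 hs ht).const_mul _, ?_⟩
  exact half_mul_lt_five_sixths_mul_simrankK22Limit (by linarith) (by linarith) (by nlinarith)

theorem evidence_simrank_K22_limit_gt_K12
    (C1 C2 : ℝ) (hC1 : 1 / 2 < C1) (hC1' : C1 ≤ 1) (hC2 : 1 / 2 < C2) (hC2' : C2 ≤ 1)
    (s t : ℕ → ℝ)
    (hs0 : s 0 = 0) (ht0 : t 0 = 0)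
    (hs : ∀ k, s (k + 1) = (C2 / 2) * (1 + t k))
    (ht : ∀ k, t (k + 1) = (C1 / 2) * (1 + s k)) :
    ∃ L' : ℝ, Filter.Tendsto (fun k => (5 / 6 : ℝ) * s k) Filter.atTop (nhds L') ∧
      L' > (1 / 2 : ℝ) * C2 :=
  evidence_simrank_K22_limit_gt_K12_general C1 C2 hC1 hC1' hC2 hC2' s t hs ht
end
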